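/- Let T be a CPTP map on a finite-dimensional Hilbert space H and H_S an invariant subspace with projection Π_S. If supp((T*)^{n+1}(Π_S)) = supp((T*)^n(Π_S)) ≠ H for some n, i.e., the increasing sequence of supports stabilizes before covering all of H, then H_S is not globally asymptotically stable. -/

import Mathlib

/-!
Since `(T*)ⁿ(P)` is positive semidefinite, a vector `v` killed by both `(T*)ⁿ(P)` and
`(T*)ⁿ⁺¹(P) = ∑ₖ Mₖᴴ (T*)ⁿ(P) Mₖ` has every `Mₖ v` killed by `(T*)ⁿ(P)` again. So once the
kernels stabilize, the kernel of `(T*)ⁿ(P)` is invariant under all Kraus operators and is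
killed by every later `(T*)ᵐ(P)`. For a unit vector `v` in it, the pure state `ρ = v vᴴ` has
`Tr(P Tᵐ ρ) = Tr((T*)ᵐ(P) ρ) = vᴴ (T*)ᵐ(P) v = 0` for `m ≥ n`, while `Tr(Tᵐ ρ) = 1`, so its
weight outside `H_S` stays `1`.
-/

open Matrix Filter Topology
open scoped ComplexOrder

/-- The support `(ker X)ᗮ` of an operator. -/
noncomputable def msupp {n : Type*} [Fintype n] [DecidableEq n]
    (X : Matrix n n ℂ) : Submodule ℂ (EuclideanSpace ℂ n) :=
  (LinearMap.ker (Matrix.toEuclideanLin X))ᗮ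

namespace Matrix

variable {n ι : Type*} [Fintype n] [Fintype ι]

def krausMap (M : ι → Matrix n n ℂ) (A : Matrix n n ℂ) : Matrix n n ℂ :=
  ∑ k, M k * A * (M k)ᴴ

def krausDual (M : ι → Matrix n n ℂ) (A : Matrix n n ℂ) : Matrix n n ℂ :=
  ∑ k, (M k)ᴴ * A * M k

variable (M : ι → Matrix n n ℂ)

theorem trace_mul_krausMap (A B : Matrix n n ℂ) :
    (A * krausMap M B).trace = (krausDual M A * B).trace := by
  simp only [krausMap, krausDual, Finset.mul_sum, Finset.sum_mul, trace_sum]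
  refine Finset.sum_congr rfl fun k _ => ?_
  rw [← Matrix.mul_assoc, ← Matrix.mul_assoc, trace_mul_comm, ← Matrix.mul_assoc,
    ← Matrix.mul_assoc]

theorem trace_mul_iterate_krausMap (m : ℕ) (A B : Matrix n n ℂ) :
    (A * (krausMap M)^[m] B).trace = ((krausDual M)^[m] A * B).trace := by
  induction m generalizing A with
  | zero => rfl
  | succ m ih =>
    rw [Function.iterate_succ_apply', trace_mul_krausMap, ih, ← Function.iterate_succ_apply,
      Function.iterate_succ_apply']

theorem posSemidef_krausDual {A : Matrix n n ℂ} (hA : A.PosSemidef) :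
    (krausDual M A).PosSemidef :=
  posSemidef_sum _ fun k _ => hA.conjTranspose_mul_mul_same (M k)

theorem posSemidef_iterate_krausDual {A : Matrix n n ℂ} (hA : A.PosSemidef) (m : ℕ) :
    ((krausDual M)^[m] A).PosSemidef := by
  induction m with
  | zero => exact hA
  | succ m ih => rw [Function.iterate_succ_apply']; exact posSemidef_krausDual M ih

variable {M}

theorem krausDual_mulVec_eq_zero {B : Matrix n n ℂ} {v : n → ℂ}
    (h : ∀ k, B *ᵥ (M k *ᵥ v) = 0) : krausDual M B *ᵥ v = 0 := by
  simp [krausDual, sum_mulVec, ← mulVec_mulVec, h]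

theorem PosSemidef.mulVec_mulVec_eq_zero_of_krausDual_mulVec_eq_zero {A : Matrix n n ℂ}
    (hA : A.PosSemidef) {v : n → ℂ} (hv : krausDual M A *ᵥ v = 0) (k : ι) :
    A *ᵥ (M k *ᵥ v) = 0 := by
  have hsum : ∑ j, star (M j *ᵥ v) ⬝ᵥ (A *ᵥ (M j *ᵥ v)) = 0 := by
    rw [← dotProduct_zero (star v), ← hv]
    simp [krausDual, sum_mulVec, dotProduct_sum, ← mulVec_mulVec, dotProduct_mulVec,
      vecMul_conjTranspose]
  rw [← hA.dotProduct_mulVec_zero_iff]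
  exact Finset.sum_eq_zero_iff_of_nonneg (fun j _ => hA.dotProduct_mulVec_nonneg _) |>.mp hsum k
    (Finset.mem_univ k)

theorem iterate_krausDual_mulVec_eq_zero {A : Matrix n n ℂ} (hA : A.PosSemidef)
    (hker : ∀ w, A *ᵥ w = 0 → krausDual M A *ᵥ w = 0) (j : ℕ) {w : n → ℂ}
    (hw : A *ᵥ w = 0) : (krausDual M)^[j] A *ᵥ w = 0 := by
  induction j generalizing w with
  | zero => exact hw
  | succ j ih =>
    rw [Function.iterate_succ_apply']
    exact krausDual_mulVec_eq_zero fun k =>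
      ih (hA.mulVec_mulVec_eq_zero_of_krausDual_mulVec_eq_zero (hker w hw) k)

variable [DecidableEq n]

theorem krausDual_one (hTP : ∑ k, (M k)ᴴ * M k = 1) : krausDual M 1 = 1 := by
  simpa [krausDual] using hTP

theorem trace_iterate_krausMap (hTP : ∑ k, (M k)ᴴ * M k = 1) (m : ℕ) (B : Matrix n n ℂ) :
    ((krausMap M)^[m] B).trace = B.trace := by
  simpa [Function.iterate_fixed (krausDual_one hTP)] using trace_mul_iterate_krausMap M m 1 B

theorem trace_compl_mul_iterate_krausMap (hTP : ∑ k, (M k)ᴴ * M k = 1) {m : ℕ}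
    {P ρ : Matrix n n ℂ} (hρ : ((krausDual M)^[m] P * ρ).trace = 0) :
    ((1 - P) * (krausMap M)^[m] ρ).trace = ρ.trace := by
  rw [Matrix.sub_mul, Matrix.one_mul, trace_sub, trace_iterate_krausMap hTP,
    trace_mul_iterate_krausMap, hρ, sub_zero]

end Matrix

section Support

variable {n : Type*} [Fintype n] [DecidableEq n]

theorem mulVec_eq_zero_iff_of_msupp_eq {X Y : Matrix n n ℂ} (h : msupp X = msupp Y)
    (w : n → ℂ) : X *ᵥ w = 0 ↔ Y *ᵥ w = 0 := by
  have hker := congrArg Submodule.orthogonal h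
  simp only [msupp, Submodule.orthogonal_orthogonal] at hker
  simpa using SetLike.ext_iff.mp hker (WithLp.toLp 2 w)

theorem exists_norm_eq_one_mulVec_eq_zero_of_msupp_ne_top {X : Matrix n n ℂ}
    (h : msupp X ≠ ⊤) : ∃ v : EuclideanSpace ℂ n, ‖v‖ = 1 ∧ X *ᵥ v.ofLp = 0 := by
  have hker : LinearMap.ker (toEuclideanLin X) ≠ ⊥ := fun hbot =>
    h (by rw [msupp, hbot, Submodule.bot_orthogonal_eq_top])
  obtain ⟨v, hv, hv0⟩ := Submodule.exists_mem_ne_zero_of_ne_bot hker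
  refine ⟨(‖v‖⁻¹ : ℂ) • v, norm_smul_inv_norm hv0, ?_⟩
  have hXv : X *ᵥ v.ofLp = 0 := congrArg WithLp.ofLp (LinearMap.mem_ker.mp hv)
  simp [mulVec_smul, hXv]

end Support

theorem EuclideanSpace.trace_vecMulVec_star_of_norm_eq_one {n : Type*} [Fintype n]
    {v : EuclideanSpace ℂ n} (hv : ‖v‖ = 1) : (vecMulVec v.ofLp (star v.ofLp)).trace = 1 := by
  rw [trace_vecMulVec, ← EuclideanSpace.inner_eq_star_dotProduct, inner_self_eq_norm_sq_to_K,
    hv]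
  norm_num

theorem stmt_18_general {d K : ℕ} (M : Fin K → Matrix (Fin d) (Fin d) ℂ)
    (hTP : ∑ k, (M k)ᴴ * M k = 1)
    (T : Matrix (Fin d) (Fin d) ℂ → Matrix (Fin d) (Fin d) ℂ)
    (hT : T = fun A => ∑ k, M k * A * (M k)ᴴ)
    (Tdual : Matrix (Fin d) (Fin d) ℂ → Matrix (Fin d) (Fin d) ℂ)
    (hTdual : Tdual = fun A => ∑ k, (M k)ᴴ * A * M k)
    (P : Matrix (Fin d) (Fin d) ℂ) (hProj : P * P = P) (hHerm : Pᴴ = P)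
    (hstab : ∃ n : ℕ, msupp (Tdual^[n + 1] P) = msupp (Tdual^[n] P) ∧
        msupp (Tdual^[n] P) ≠ ⊤) :
    ¬ (∀ ρ : Matrix (Fin d) (Fin d) ℂ, ρ.PosSemidef → ρ.trace = 1 →
        Tendsto (fun m => ((1 - P) * T^[m] ρ).trace) atTop (𝓝 0)) := by
  obtain rfl : T = krausMap M := hT
  obtain rfl : Tdual = krausDual M := hTdual
  obtain ⟨n, hstab, hne⟩ := hstab
  have hP : P.PosSemidef := by
    simpa [hHerm, hProj] using posSemidef_conjTranspose_mul_self P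
  obtain ⟨v, hv1, hv⟩ := exists_norm_eq_one_mulVec_eq_zero_of_msupp_ne_top hne
  have hker : ∀ m ≥ n, (krausDual M)^[m] P *ᵥ v.ofLp = 0 := by
    intro m hm
    obtain ⟨j, rfl⟩ := Nat.exists_eq_add_of_le hm
    rw [add_comm, Function.iterate_add_apply]
    refine iterate_krausDual_mulVec_eq_zero (posSemidef_iterate_krausDual M hP n)
      (fun w hw => ?_) j hv
    simpa only [Function.iterate_succ_apply'] using
      (mulVec_eq_zero_iff_of_msupp_eq hstab w).2 hw
  set ρ := vecMulVec v.ofLp (star v.ofLp)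
  have hρ : ρ.trace = 1 := EuclideanSpace.trace_vecMulVec_star_of_norm_eq_one hv1
  have hconst : ∀ m ≥ n, ((1 - P) * (krausMap M)^[m] ρ).trace = 1 := fun m hm =>
    (trace_compl_mul_iterate_krausMap hTP (by
      rw [mul_vecMulVec, hker m hm, zero_vecMulVec, trace_zero])).trans hρ
  intro hGAS
  refine one_ne_zero (tendsto_nhds_unique ?_ (hGAS ρ (posSemidef_vecMulVec_self_star _) hρ))
  exact tendsto_const_nhds.congr' (eventually_atTop.2 ⟨n, fun m hm => (hconst m hm).symm⟩)

/-- If `H_S` (given by the orthogonal projection `P`) is invariant for the CPTP map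
`T` and the nondecreasing sequence of supports of `(T*)^n(P)` stabilizes at a proper
subspace of `H`, then `H_S` is not globally asymptotically stable. -/
theorem stmt_18 {d K : ℕ} (M : Fin K → Matrix (Fin d) (Fin d) ℂ)
    (hTP : ∑ k, (M k)ᴴ * M k = 1)
    (T : Matrix (Fin d) (Fin d) ℂ → Matrix (Fin d) (Fin d) ℂ)
    (hT : T = fun A => ∑ k, M k * A * (M k)ᴴ)
    (Tdual : Matrix (Fin d) (Fin d) ℂ → Matrix (Fin d) (Fin d) ℂ)
    (hTdual : Tdual = fun A => ∑ k, (M k)ᴴ * A * M k)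
    (P : Matrix (Fin d) (Fin d) ℂ) (hProj : P * P = P) (hHerm : Pᴴ = P)
    (hinv : ∀ ρ : Matrix (Fin d) (Fin d) ℂ, ρ.PosSemidef →
        msupp ρ ≤ LinearMap.range (Matrix.toEuclideanLin P) →
        msupp (T ρ) ≤ LinearMap.range (Matrix.toEuclideanLin P))
    (hstab : ∃ n : ℕ, msupp (Tdual^[n + 1] P) = msupp (Tdual^[n] P) ∧
        msupp (Tdual^[n] P) ≠ ⊤) :
    ¬ (∀ ρ : Matrix (Fin d) (Fin d) ℂ, ρ.PosSemidef → ρ.trace = 1 →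
        Tendsto (fun m => ((1 - P) * T^[m] ρ).trace) atTop (𝓝 0)) :=
  stmt_18_general M hTP T hT Tdual hTdual P hProj hHerm hstab
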